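/- Let F be a distribution on ℝ and G a distribution on (0,∞), and let α ≥ 0. If F ∈ R*_{-α} and Ḡ(x) = o(F̄(x)) as x → ∞, then every convex combination pF+(1-p)G, 0<p<1, belongs to R*_{-α}. -/

import Mathlib

/-!
Conditioning on `ξ > 0` and passing to `log ξ`, the mixture becomes `a ν + b B` with
`ν ∈ S(α)` (coming from `F`) and `B̄ = o(ν̄)` (coming from `G`). Its tail is `~ a ν̄`, so
long-tailedness transfers, and `B` inherits the exponential moment of `ν` because `B̄ ≤ M ν̄`.
For the convolution, `(ρ ∗ ρ)‾ = a² (ν ∗ ν)‾ + 2ab (ν ∗ B)‾ + b² (B ∗ B)‾`, and the point is that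
`(ν ∗ B)‾(x) = ∫ ν̄(x - y) dB(y) ~ B̂(α) ν̄(x)` while `(B ∗ B)‾ = o(ν̄)`. Split the integral at a
large `T`: on `y ≤ T` dominated convergence applies since `ν̄(x - y)/ν̄(x) → e^{αy}`; on `y > T`,
Tonelli bounds it by `ε (ν ∗ ν)‾(x) + B̄(T) ν̄(x - T)`, which is small relative to `ν̄(x)`
because `(ν ∗ ν)‾ = O(ν̄)` and `B̄(T) e^{αT} → 0`.
-/

open MeasureTheory ProbabilityTheory Filter Asymptotics

noncomputable section

/-- The tail function `Ū(x) = U((x,∞))` of a measure on `ℝ`. -/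
def tailDist (μ : Measure ℝ) (x : ℝ) : ℝ := (μ (Set.Ioi x)).toReal

/-- Convolution of two measures on `ℝ`. -/
def convDist (μ ν : Measure ℝ) : Measure ℝ := (μ.prod ν).map (fun p => p.1 + p.2)

/-- The distribution with CDF `V(x)𝟙_{x ≥ 0}`, i.e. the pushforward under `x ↦ max x 0`. -/
def posMod (μ : Measure ℝ) : Measure ℝ := μ.map (fun x => max x 0)

/-- `V̂(α) = ∫ e^{αx} V(dx)`. -/
def mgfVal (μ : Measure ℝ) (α : ℝ) : ℝ := ∫ x, Real.exp (α * x) ∂μ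

/-- The convolution-equivalence class `S(α)`: a distribution `V` on `ℝ` is in `S(α)` if
the distribution with CDF `V(x)𝟙_{x ≥ 0}` has everywhere positive tail,
`V̄(x-y)/V̄(x) → e^{αy}` for all `y`, `V̂(α) = ∫ e^{αx} V(dx) < ∞`, and
`\overline{V^{2*}}(x)/V̄(x) → 2V̂(α)`. -/
def MemCE (α : ℝ) (V : Measure ℝ) : Prop :=
  (∀ x : ℝ, 0 < tailDist (posMod V) x) ∧
  (∀ y : ℝ, Tendsto (fun x => tailDist (posMod V) (x - y) / tailDist (posMod V) x)
      atTop (nhds (Real.exp (α * y)))) ∧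
  Integrable (fun x => Real.exp (α * x)) (posMod V) ∧
  Tendsto (fun x => tailDist (convDist (posMod V) (posMod V)) x / tailDist (posMod V) x)
      atTop (nhds (2 * mgfVal (posMod V) α))

/-- Strongly regular variation `R*_{-α}`: the distribution `V` with tail
`V̄(x) = Ū(eˣ)/Ū(0)` (i.e. the conditional law of `ln ξ` given `ξ > 0`, where `ξ ∼ U`)
belongs to `S(α)`. -/
def MemSRV (α : ℝ) (U : Measure ℝ) : Prop :=
  U (Set.Ioi 0) ≠ 0 ∧
  MemCE α (((U (Set.Ioi 0))⁻¹ • U.restrict (Set.Ioi 0)).map Real.log)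

/-- Regular variation `R_{-α}`: `Ū(x) > 0` for all `x` and `Ū(xy)/Ū(x) → y^{-α}` for `y > 0`. -/
def MemRV (α : ℝ) (U : Measure ℝ) : Prop :=
  (∀ x : ℝ, 0 < tailDist U x) ∧
  ∀ y : ℝ, 0 < y →
    Tendsto (fun x => tailDist U (x * y) / tailDist U x) atTop (nhds (y ^ (-α)))

/-- Assumption A: every convex combination `pF + (1-p)G`, `0 < p < 1`,
is of strongly regular variation with index `-α`. -/
def AssumpA (α : ℝ) (F G : Measure ℝ) : Prop :=
  ∀ p : ℝ, 0 < p → p < 1 →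
    MemSRV α (ENNReal.ofReal p • F + ENNReal.ofReal (1 - p) • G)

end

open Set ENNReal Topology

section Tail

lemma tailDist_nonneg (μ : Measure ℝ) (x : ℝ) : 0 ≤ tailDist μ x := toReal_nonneg

lemma tailDist_antitone (μ : Measure ℝ) [IsFiniteMeasure μ] : Antitone (tailDist μ) :=
  fun _ _ h => toReal_mono (measure_ne_top μ _) (measure_mono (Ioi_subset_Ioi h))

lemma tailDist_le_measureReal_univ (μ : Measure ℝ) [IsFiniteMeasure μ] (x : ℝ) :
    tailDist μ x ≤ μ.real univ :=
  measureReal_mono (subset_univ _)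

lemma ofReal_tailDist (μ : Measure ℝ) [IsFiniteMeasure μ] (x : ℝ) :
    ENNReal.ofReal (tailDist μ x) = μ (Ioi x) :=
  ofReal_toReal (measure_ne_top μ _)

lemma tailDist_smul (c : ℝ≥0∞) (μ : Measure ℝ) (x : ℝ) :
    tailDist (c • μ) x = c.toReal * tailDist μ x := by
  simp only [tailDist, Measure.smul_apply, smul_eq_mul, toReal_mul]

lemma tailDist_add (μ ν : Measure ℝ) [IsFiniteMeasure μ] [IsFiniteMeasure ν] (x : ℝ) :
    tailDist (μ + ν) x = tailDist μ x + tailDist ν x := by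
  simp only [tailDist, Measure.add_apply]
  exact toReal_add (measure_ne_top μ _) (measure_ne_top ν _)

lemma tailDist_smul_add_smul (μ ν : Measure ℝ) [IsFiniteMeasure μ] [IsFiniteMeasure ν]
    {a b : ℝ≥0∞} (ha : a ≠ ∞) (hb : b ≠ ∞) (x : ℝ) :
    tailDist (a • μ + b • ν) x = a.toReal * tailDist μ x + b.toReal * tailDist ν x := by
  have := μ.smul_finite ha
  have := ν.smul_finite hb
  rw [tailDist_add, tailDist_smul, tailDist_smul]

lemma measurable_measure_Ioi_sub (μ : Measure ℝ) (x : ℝ) :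
    Measurable fun y => μ (Ioi (x - y)) :=
  Monotone.measurable fun _ _ h => measure_mono (Ioi_subset_Ioi (by linarith))

lemma measurable_tailDist_sub (μ : Measure ℝ) (x : ℝ) : Measurable fun y => tailDist μ (x - y) :=
  (measurable_measure_Ioi_sub μ x).ennreal_toReal

lemma integral_tailDist_sub (μ ν : Measure ℝ) [IsFiniteMeasure μ] (x : ℝ) :
    ∫ y, tailDist μ (x - y) ∂ν = (∫⁻ y, μ (Ioi (x - y)) ∂ν).toReal :=
  integral_toReal (measurable_measure_Ioi_sub μ x).aemeasurable
    (ae_of_all _ fun _ => measure_lt_top μ _)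

lemma integrable_tailDist_sub (μ ν : Measure ℝ) [IsFiniteMeasure μ] [IsFiniteMeasure ν] (x : ℝ) :
    Integrable (fun y => tailDist μ (x - y)) ν :=
  .of_bound (measurable_tailDist_sub μ x).aestronglyMeasurable (μ.real univ) <| ae_of_all _
    fun y => by
      rw [Real.norm_of_nonneg (tailDist_nonneg _ _)]
      exact tailDist_le_measureReal_univ μ _

end Tail

section Convolution

lemma convDist_eq_conv (μ ν : Measure ℝ) : convDist μ ν = μ ∗ ν := rfl

instance (μ ν : Measure ℝ) [IsFiniteMeasure μ] [IsFiniteMeasure ν] :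
    IsFiniteMeasure (convDist μ ν) :=
  inferInstanceAs (IsFiniteMeasure (μ ∗ ν))

lemma convDist_apply_Ioi (μ ν : Measure ℝ) [SFinite μ] [SFinite ν] (x : ℝ) :
    convDist μ ν (Ioi x) = ∫⁻ y, μ (Ioi (x - y)) ∂ν := by
  rw [convDist, Measure.map_apply (by fun_prop) measurableSet_Ioi,
    Measure.prod_apply_symm (measurableSet_Ioi.preimage (by fun_prop))]
  congr 1; ext y; congr 1; ext u
  simp [sub_lt_iff_lt_add]

lemma tailDist_convDist (μ ν : Measure ℝ) [IsFiniteMeasure μ] [IsFiniteMeasure ν] (x : ℝ) :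
    tailDist (convDist μ ν) x = ∫ y, tailDist μ (x - y) ∂ν := by
  rw [integral_tailDist_sub, tailDist, convDist_apply_Ioi]

lemma tailDist_convDist_eq_Iic_add_Ioi (μ ν : Measure ℝ) [IsFiniteMeasure μ] [IsFiniteMeasure ν]
    (T x : ℝ) :
    tailDist (convDist μ ν) x =
      (∫ y in Iic T, tailDist μ (x - y) ∂ν) + ∫ y in Ioi T, tailDist μ (x - y) ∂ν := by
  rw [tailDist_convDist, ← integral_add_compl measurableSet_Iic (integrable_tailDist_sub μ ν x),
    compl_Iic]

lemma tailDist_convDist_smul_add_smul (ν B : Measure ℝ) [IsFiniteMeasure ν] [IsFiniteMeasure B]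
    {a b : ℝ≥0∞} (ha : a ≠ ∞) (hb : b ≠ ∞) (x : ℝ) :
    tailDist (convDist (a • ν + b • B) (a • ν + b • B)) x =
      a.toReal ^ 2 * tailDist (convDist ν ν) x + 2 * a.toReal * b.toReal *
        tailDist (convDist ν B) x + b.toReal ^ 2 * tailDist (convDist B B) x := by
  have h : convDist (a • ν + b • B) (a • ν + b • B) (Ioi x) =
      a ^ 2 * convDist ν ν (Ioi x) + 2 * a * b * convDist ν B (Ioi x) +
        b ^ 2 * convDist B B (Ioi x) := by
    simp only [convDist_eq_conv, Measure.conv_add, Measure.add_conv, Measure.conv_smul_left,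
      Measure.conv_smul_right, Measure.conv_comm B ν, Measure.add_apply, Measure.smul_apply,
      smul_eq_mul]
    ring
  rw [tailDist, h, toReal_add (by finiteness) (by finiteness), toReal_add (by finiteness)
    (by finiteness)]
  simp only [tailDist, toReal_mul, toReal_pow, toReal_ofNat]

end Convolution

section ExponentialMoment

variable {μ ν : Measure ℝ} {α : ℝ}

lemma lintegral_exp_mul_eq_lintegral_measure_Ioi (hα : 0 < α) :
    ∫⁻ x, ENNReal.ofReal (Real.exp (α * x)) ∂μ = ∫⁻ t in Ioi 0, μ (Ioi (Real.log t / α)) := by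
  rw [lintegral_eq_lintegral_meas_lt μ (ae_of_all _ fun _ => (Real.exp_pos _).le)
    (by fun_prop)]
  refine setLIntegral_congr_fun measurableSet_Ioi fun t (ht : 0 < t) => ?_
  congr 1
  ext x
  rw [mem_ofPred_eq, mem_Ioi, div_lt_iff₀ hα, mul_comm, Real.log_lt_iff_lt_exp ht]

lemma integrable_exp_mul_of_tailDist_le [IsFiniteMeasure μ] [IsFiniteMeasure ν] (hα : 0 ≤ α)
    (hν : Integrable (fun x => Real.exp (α * x)) ν) {M : ℝ} (hM : 0 ≤ M)
    (hμν : ∀ s, tailDist μ s ≤ M * tailDist ν s) :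
    Integrable (fun x => Real.exp (α * x)) μ := by
  rcases hα.eq_or_lt with rfl | hα
  · simp
  refine ⟨by fun_prop, ?_⟩
  have hexp_pos : ∀ (ρ : Measure ℝ), 0 ≤ᵐ[ρ] fun x => Real.exp (α * x) :=
    fun _ => ae_of_all _ fun _ => (Real.exp_pos _).le
  rw [hasFiniteIntegral_iff_ofReal (hexp_pos μ), lintegral_exp_mul_eq_lintegral_measure_Ioi hα]
  have hν' := (hasFiniteIntegral_iff_ofReal (hexp_pos ν)).1 hν.2
  rw [lintegral_exp_mul_eq_lintegral_measure_Ioi hα] at hν'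
  calc ∫⁻ t in Ioi 0, μ (Ioi (Real.log t / α))
      ≤ ∫⁻ t in Ioi 0, ENNReal.ofReal M * ν (Ioi (Real.log t / α)) := by
        refine lintegral_mono fun t => ?_
        rw [← ofReal_tailDist, ← ofReal_tailDist, ← ofReal_mul hM]
        exact ofReal_le_ofReal (hμν _)
    _ = ENNReal.ofReal M * ∫⁻ t in Ioi 0, ν (Ioi (Real.log t / α)) :=
        lintegral_const_mul' _ _ ofReal_ne_top
    _ < ∞ := mul_lt_top ofReal_lt_top hν'

lemma tendsto_tailDist_mul_exp_nhds_zero [IsFiniteMeasure μ] (hα : 0 ≤ α)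
    (hμ : Integrable (fun x => Real.exp (α * x)) μ) :
    Tendsto (fun T => tailDist μ T * Real.exp (α * T)) atTop (𝓝 0) := by
  refine tendsto_of_tendsto_of_tendsto_of_le_of_le tendsto_const_nhds
    (tendsto_integral_Ioi_zero (μ := μ) (f := fun y => Real.exp (α * y)) tendsto_id)
    (fun T => mul_nonneg (tailDist_nonneg _ _) (Real.exp_pos _).le) fun T => ?_
  calc tailDist μ T * Real.exp (α * T) = ∫ _ in Ioi T, Real.exp (α * T) ∂μ := by
        rw [setIntegral_const, smul_eq_mul]; rfl
    _ ≤ ∫ y in Ioi T, Real.exp (α * y) ∂μ :=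
        setIntegral_mono_on (integrable_const _) hμ.integrableOn measurableSet_Ioi
          fun y (hy : T < y) => Real.exp_le_exp.2 (mul_le_mul_of_nonneg_left hy.le hα)

end ExponentialMoment

section ConvolutionTail

variable {ν B : Measure ℝ} {α K : ℝ}

lemma eventually_tailDist_le_mul (hB : tailDist B =o[atTop] tailDist ν) {ε : ℝ} (hε : 0 < ε) :
    ∀ᶠ t in atTop, tailDist B t ≤ ε * tailDist ν t := by
  filter_upwards [hB.def hε] with t ht
  rwa [Real.norm_of_nonneg (tailDist_nonneg _ _), Real.norm_of_nonneg (tailDist_nonneg _ _)] at ht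

variable [IsFiniteMeasure ν] [IsFiniteMeasure B]

lemma exists_tailDist_le_mul (hν : ∀ x, 0 < tailDist ν x) (hB : tailDist B =o[atTop] tailDist ν) :
    ∃ M, 0 < M ∧ ∀ s, tailDist B s ≤ M * tailDist ν s := by
  obtain ⟨x₀, hx₀⟩ := eventually_atTop.1 (eventually_tailDist_le_mul hB one_pos)
  refine ⟨max 1 (B.real univ / tailDist ν x₀), by positivity, fun s => ?_⟩
  rcases le_total x₀ s with hs | hs
  · exact (hx₀ s hs).trans (mul_le_mul_of_nonneg_right (le_max_left _ _) (tailDist_nonneg _ _))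
  · calc tailDist B s ≤ B.real univ / tailDist ν x₀ * tailDist ν x₀ := by
          rw [div_mul_cancel₀ _ (hν x₀).ne']
          exact tailDist_le_measureReal_univ B s
      _ ≤ _ := mul_le_mul (le_max_right _ _) (tailDist_antitone ν hs) (tailDist_nonneg _ _)
          (by positivity)

lemma tendsto_tailDist_smul_add_smul_div (hν : ∀ x, 0 < tailDist ν x)
    (hB : tailDist B =o[atTop] tailDist ν) {a b : ℝ≥0∞} (ha : a ≠ ∞) (hb : b ≠ ∞) :
    Tendsto (fun x => tailDist (a • ν + b • B) x / tailDist ν x) atTop (𝓝 a.toReal) := by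
  have h := (hB.tendsto_div_nhds_zero.const_mul b.toReal).const_add a.toReal
  rw [mul_zero, add_zero] at h
  refine h.congr fun x => ?_
  rw [tailDist_smul_add_smul ν B ha hb, add_div, mul_div_assoc, mul_div_assoc,
    div_self (hν x).ne', mul_one]

/-- By Tonelli, `∫_{y > T} ν(x - y, ∞) dB(y) = ∫ B((T, ∞) ∩ (x - u, ∞)) dν(u)`, and `B ≤ ε ν` on
`(T, ∞)`; integrating `ν(x - u, ∞)` against `ν` gives back `ν ∗ ν`. -/
lemma lintegral_Ioi_measure_Ioi_sub_le {T : ℝ} {ε : ℝ≥0∞}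
    (hT : ∀ t, T ≤ t → B (Ioi t) ≤ ε * ν (Ioi t)) (x : ℝ) :
    ∫⁻ y in Ioi T, ν (Ioi (x - y)) ∂B ≤
      ε * convDist ν ν (Ioi x) + B (Ioi T) * ν (Ioi (x - T)) := by
  calc ∫⁻ y in Ioi T, ν (Ioi (x - y)) ∂B = ∫⁻ u, B.restrict (Ioi T) (Ioi (x - u)) ∂ν := by
        rw [← convDist_apply_Ioi, convDist_eq_conv, Measure.conv_comm, ← convDist_eq_conv,
          convDist_apply_Ioi]
    _ ≤ ∫⁻ u, (ε * ν (Ioi (x - u)) + (Ioi (x - T)).indicator (fun _ => B (Ioi T)) u) ∂ν := by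
        refine lintegral_mono fun u => ?_
        rw [Measure.restrict_apply measurableSet_Ioi]
        rcases le_or_gt u (x - T) with hu | hu
        · rw [indicator_of_notMem (by simpa using hu), add_zero]
          exact (measure_mono inter_subset_left).trans (hT _ (by linarith))
        · rw [indicator_of_mem (by simpa using hu)]
          exact (measure_mono inter_subset_right).trans le_add_self
    _ = ε * convDist ν ν (Ioi x) + B (Ioi T) * ν (Ioi (x - T)) := by
        rw [lintegral_add_right _ (measurable_const.indicator measurableSet_Ioi),
          lintegral_const_mul _ (measurable_measure_Ioi_sub ν x),
          lintegral_indicator_const measurableSet_Ioi, convDist_apply_Ioi]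

lemma setIntegral_Ioi_tailDist_sub_le {T ε : ℝ} (hε : 0 ≤ ε)
    (hT : ∀ t, T ≤ t → tailDist B t ≤ ε * tailDist ν t) (x : ℝ) :
    ∫ y in Ioi T, tailDist ν (x - y) ∂B ≤
      ε * tailDist (convDist ν ν) x + tailDist B T * tailDist ν (x - T) := by
  have hT' : ∀ t, T ≤ t → B (Ioi t) ≤ ENNReal.ofReal ε * ν (Ioi t) := fun t ht => by
    rw [← ofReal_tailDist, ← ofReal_tailDist, ← ofReal_mul hε]
    exact ofReal_le_ofReal (hT t ht)
  rw [integral_tailDist_sub]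
  refine (toReal_mono (by finiteness) (lintegral_Ioi_measure_Ioi_sub_le hT' x)).trans_eq ?_
  rw [toReal_add (by finiteness) (by finiteness), toReal_mul, toReal_mul, toReal_ofReal hε]
  rfl

lemma tendsto_setIntegral_Iic_tailDist_sub_div (hν : ∀ x, 0 < tailDist ν x)
    (hlong : ∀ y, Tendsto (fun x => tailDist ν (x - y) / tailDist ν x) atTop
      (𝓝 (Real.exp (α * y)))) (T : ℝ) :
    Tendsto (fun x => (∫ y in Iic T, tailDist ν (x - y) ∂B) / tailDist ν x) atTop
      (𝓝 (∫ y in Iic T, Real.exp (α * y) ∂B)) := by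
  simp_rw [← integral_div]
  refine tendsto_integral_filter_of_dominated_convergence (fun _ => Real.exp (α * T) + 1)
    (.of_forall fun x => ((measurable_tailDist_sub ν x).div_const _).aestronglyMeasurable) ?_
    (integrable_const _) (ae_of_all _ hlong)
  filter_upwards [(hlong T).eventually_lt_const (lt_add_one _)] with x hx
  filter_upwards [ae_restrict_mem measurableSet_Iic] with y (hy : y ≤ T)
  rw [Real.norm_of_nonneg (div_nonneg (tailDist_nonneg _ _) (tailDist_nonneg _ _))]
  exact (div_le_div_of_nonneg_right (tailDist_antitone ν (by linarith)) (hν x).le).trans hx.le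

end ConvolutionTail

section ConvolutionTailLimits

variable {ν B : Measure ℝ} [IsFiniteMeasure ν] [IsFiniteMeasure B] {α K : ℝ}
  (hα : 0 ≤ α) (hν : ∀ x, 0 < tailDist ν x)
  (hlong : ∀ y, Tendsto (fun x => tailDist ν (x - y) / tailDist ν x) atTop
    (𝓝 (Real.exp (α * y))))
  (hconv : Tendsto (fun x => tailDist (convDist ν ν) x / tailDist ν x) atTop (𝓝 K))
  (hB : tailDist B =o[atTop] tailDist ν) (hBexp : Integrable (fun x => Real.exp (α * x)) B)
include hα hν hlong hconv hB hBexp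

lemma eventually_setIntegral_Ioi_tailDist_sub_div_lt {η : ℝ} (hη : 0 < η) :
    ∀ᶠ T in atTop, ∀ᶠ x in atTop, (∫ y in Ioi T, tailDist ν (x - y) ∂B) / tailDist ν x < η := by
  have hsmall : ∀ᶠ ε in 𝓝[>] (0 : ℝ), ε * K < η / 2 :=
    (((continuous_mul_const K).tendsto' 0 0 (zero_mul K)).mono_left nhdsWithin_le_nhds)
      |>.eventually_lt_const (half_pos hη)
  obtain ⟨ε, hεK, hε : 0 < ε⟩ := (hsmall.and self_mem_nhdsWithin).exists
  filter_upwards [eventually_forall_ge_atTop.2 (eventually_tailDist_le_mul hB hε),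
    (tendsto_tailDist_mul_exp_nhds_zero hα hBexp).eventually_lt_const (half_pos hη)] with T hT hTexp
  have hbound : Tendsto (fun x => ε * (tailDist (convDist ν ν) x / tailDist ν x) +
      tailDist B T * (tailDist ν (x - T) / tailDist ν x)) atTop
      (𝓝 (ε * K + tailDist B T * Real.exp (α * T))) :=
    (hconv.const_mul ε).add ((hlong T).const_mul _)
  filter_upwards [hbound.eventually_lt_const (show _ < η by linarith)] with x hx
  calc _ ≤ (ε * tailDist (convDist ν ν) x + tailDist B T * tailDist ν (x - T)) / tailDist ν x :=
        div_le_div_of_nonneg_right (setIntegral_Ioi_tailDist_sub_le hε.le hT x) (hν x).le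
    _ < η := by rwa [add_div, mul_div_assoc, mul_div_assoc]

theorem tendsto_tailDist_convDist_div :
    Tendsto (fun x => tailDist (convDist ν B) x / tailDist ν x) atTop (𝓝 (mgfVal B α)) := by
  have hhead := tendsto_setIntegral_Iic_tailDist_sub_div (B := B) hν hlong
  have hmgf : Tendsto (fun T => ∫ y in Iic T, Real.exp (α * y) ∂B) atTop (𝓝 (mgfVal B α)) :=
    (aecover_Iic tendsto_id).integral_tendsto_of_countably_generated hBexp
  refine tendsto_order.2 ⟨fun a ha => ?_, fun a ha => ?_⟩
  · obtain ⟨T, hT⟩ := (hmgf.eventually_const_lt ha).exists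
    filter_upwards [(hhead T).eventually_const_lt hT] with x hx
    refine hx.trans_le (div_le_div_of_nonneg_right ?_ (hν x).le)
    rw [tailDist_convDist_eq_Iic_add_Ioi ν B T x]
    exact le_add_of_nonneg_right (setIntegral_nonneg measurableSet_Ioi
      fun _ _ => tailDist_nonneg _ _)
  · obtain ⟨T, hT, htail⟩ := ((hmgf.eventually_lt_const
      (show mgfVal B α < mgfVal B α + (a - mgfVal B α) / 2 by linarith)).and
      (eventually_setIntegral_Ioi_tailDist_sub_div_lt hα hν hlong hconv hB hBexp
        (half_pos (sub_pos.2 ha)))).exists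
    filter_upwards [(hhead T).eventually_lt_const hT, htail] with x hhead_x htail_x
    rw [tailDist_convDist_eq_Iic_add_Ioi ν B T x, add_div]
    linarith

theorem tendsto_tailDist_convDist_self_div :
    Tendsto (fun x => tailDist (convDist B B) x / tailDist ν x) atTop (𝓝 0) := by
  obtain ⟨M, hM, hBM⟩ := exists_tailDist_le_mul hν hB
  have hbound : ∀ T x, tailDist (convDist B B) x ≤
      B.real univ * tailDist B (x - T) + M * ∫ y in Ioi T, tailDist ν (x - y) ∂B := by
    intro T x
    rw [tailDist_convDist_eq_Iic_add_Ioi B B T, ← integral_const_mul]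
    gcongr ?_ + ?_
    · calc ∫ y in Iic T, tailDist B (x - y) ∂B ≤ ∫ _ in Iic T, tailDist B (x - T) ∂B :=
            setIntegral_mono_on (integrable_tailDist_sub B B x).integrableOn (integrable_const _)
              measurableSet_Iic fun y (hy : y ≤ T) => tailDist_antitone B (by linarith)
        _ ≤ B.real univ * tailDist B (x - T) := by
            rw [setIntegral_const, smul_eq_mul]
            exact mul_le_mul_of_nonneg_right (measureReal_mono (subset_univ _))
              (tailDist_nonneg _ _)
    · exact setIntegral_mono (integrable_tailDist_sub B B x).integrableOn
        ((integrable_tailDist_sub ν B x).const_mul M).integrableOn fun y => hBM _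
  have hshift : ∀ T, Tendsto (fun x => tailDist B (x - T) / tailDist ν x) atTop (𝓝 0) := by
    intro T
    have h := (hB.tendsto_div_nhds_zero.comp (tendsto_atTop_add_const_right _ (-T)
      tendsto_id)).mul (hlong T)
    rw [zero_mul] at h
    refine h.congr fun x => ?_
    simp only [Function.comp_apply, id, ← sub_eq_add_neg]
    exact div_mul_div_cancel₀ (hν _).ne'
  refine tendsto_order.2 ⟨fun a ha => .of_forall fun x => ha.trans_le
    (div_nonneg (tailDist_nonneg _ _) (tailDist_nonneg _ _)), fun a ha => ?_⟩
  obtain ⟨T, hT⟩ := (eventually_setIntegral_Ioi_tailDist_sub_div_lt hα hν hlong hconv hB hBexp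
    (show 0 < a / (2 * M) by positivity)).exists
  have hhead := ((hshift T).const_mul (B.real univ)).eventually_lt_const
    (show B.real univ * 0 < a / 2 by rw [mul_zero]; exact half_pos ha)
  filter_upwards [hT, hhead] with x htail_x hhead_x
  calc tailDist (convDist B B) x / tailDist ν x ≤
        B.real univ * (tailDist B (x - T) / tailDist ν x) +
          M * ((∫ y in Ioi T, tailDist ν (x - y) ∂B) / tailDist ν x) := by
        rw [mul_div_assoc', mul_div_assoc', ← add_div]
        exact div_le_div_of_nonneg_right (hbound T x) (hν x).le
    _ < a / 2 + M * (a / (2 * M)) := by gcongr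
    _ = a := by field_simp; ring

theorem tendsto_tailDist_convDist_smul_add_smul_div {a b : ℝ≥0∞} (ha : a ≠ ∞) (hb : b ≠ ∞) :
    Tendsto (fun x => tailDist (convDist (a • ν + b • B) (a • ν + b • B)) x / tailDist ν x)
      atTop (𝓝 (a.toReal ^ 2 * K + 2 * a.toReal * b.toReal * mgfVal B α)) := by
  have h := ((hconv.const_mul (a.toReal ^ 2)).add
    ((tendsto_tailDist_convDist_div hα hν hlong hconv hB hBexp).const_mul
      (2 * a.toReal * b.toReal))).add
    ((tendsto_tailDist_convDist_self_div hα hν hlong hconv hB hBexp).const_mul (b.toReal ^ 2))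
  rw [mul_zero, add_zero] at h
  refine h.congr fun x => ?_
  rw [tailDist_convDist_smul_add_smul ν B ha hb]
  ring

end ConvolutionTailLimits

lemma tendsto_comp_sub_div_of_tendsto_div {f g : ℝ → ℝ} {a c y : ℝ} (ha : a ≠ 0)
    (hg : ∀ x, g x ≠ 0) (hfg : Tendsto (fun x => f x / g x) atTop (𝓝 a))
    (hgy : Tendsto (fun x => g (x - y) / g x) atTop (𝓝 c)) :
    Tendsto (fun x => f (x - y) / f x) atTop (𝓝 c) := by
  have h := ((hfg.comp (tendsto_atTop_add_const_right _ (-y) tendsto_id)).mul hgy).div hfg ha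
  rw [mul_div_cancel_left₀ c ha] at h
  refine h.congr' ?_
  filter_upwards [hfg.eventually_ne ha] with x hx
  have hfx : f x ≠ 0 := left_ne_zero_of_mul (by simpa [div_eq_mul_inv] using hx)
  have hgx := hg x
  have hgxy := hg (x - y)
  simp only [Pi.div_apply, Function.comp_apply, id, ← sub_eq_add_neg]
  field_simp

theorem MemCE.of_posMod_eq_smul_add_smul {V W B : Measure ℝ} [IsFiniteMeasure (posMod V)]
    [IsFiniteMeasure B] {α : ℝ} (hα : 0 ≤ α) (hV : MemCE α V)
    (hB : tailDist B =o[atTop] tailDist (posMod V)) {a b : ℝ≥0∞} (ha₀ : a ≠ 0) (ha : a ≠ ∞)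
    (hb : b ≠ ∞) (hW : posMod W = a • posMod V + b • B) : MemCE α W := by
  obtain ⟨hν, hlong, hνexp, hconv⟩ := hV
  obtain ⟨M, hM, hBM⟩ := exists_tailDist_le_mul hν hB
  have hBexp := integrable_exp_mul_of_tailDist_le hα hνexp hM.le hBM
  have ha' : 0 < a.toReal := toReal_pos ha₀ ha
  have hratio := tendsto_tailDist_smul_add_smul_div hν hB ha hb
  rw [MemCE, hW]
  refine ⟨fun x => ?_, fun y => tendsto_comp_sub_div_of_tendsto_div ha'.ne'
    (fun x => (hν x).ne') hratio (hlong y),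
    (hνexp.smul_measure ha).add_measure (hBexp.smul_measure hb), ?_⟩
  · rw [tailDist_smul_add_smul _ _ ha hb]
    exact add_pos_of_pos_of_nonneg (mul_pos ha' (hν x))
      (mul_nonneg toReal_nonneg (tailDist_nonneg _ _))
  · have hmgf : mgfVal (a • posMod V + b • B) α =
        a.toReal * mgfVal (posMod V) α + b.toReal * mgfVal B α := by
      rw [mgfVal, integral_add_measure (hνexp.smul_measure ha) (hBexp.smul_measure hb),
        integral_smul_measure, integral_smul_measure]
      rfl
    have h := (tendsto_tailDist_convDist_smul_add_smul_div hα hν hlong hconv hB hBexp ha hb).div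
      hratio ha'.ne'
    convert h using 2 with x
    · exact (div_div_div_cancel_right₀ (hν x).ne' _ _).symm
    · rw [hmgf]
      field_simp

section LogTransform

/-- Unnormalised form of the distribution `V(x)𝟙_{x ≥ 0}`, `V(x) = 1 - Ū(eˣ)/Ū(0)`, attached to
`U` in the definition of `R*_{-α}`. -/
noncomputable def posLogMeasure (U : Measure ℝ) : Measure ℝ :=
  posMod ((U.restrict (Ioi 0)).map Real.log)

instance (U : Measure ℝ) [IsFiniteMeasure U] : IsFiniteMeasure (posLogMeasure U) := by
  unfold posLogMeasure posMod
  infer_instance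

lemma posLogMeasure_add (U U' : Measure ℝ) :
    posLogMeasure (U + U') = posLogMeasure U + posLogMeasure U' := by
  simp only [posLogMeasure, posMod, Measure.restrict_add, Measure.map_add _ _ Real.measurable_log,
    Measure.map_add _ _ (by fun_prop : Measurable fun x : ℝ => max x 0)]

lemma posMod_map_log_smul_restrict (c : ℝ≥0∞) (U : Measure ℝ) :
    posMod ((c • U.restrict (Ioi 0)).map Real.log) = c • posLogMeasure U := by
  rw [Measure.map_smul, posMod, Measure.map_smul]
  rfl

lemma posLogMeasure_Ioi (U : Measure ℝ) {x : ℝ} (hx : 0 ≤ x) :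
    posLogMeasure U (Ioi x) = U (Ioi (Real.exp x)) := by
  rw [posLogMeasure, posMod, Measure.map_apply (by fun_prop) measurableSet_Ioi,
    Measure.map_apply_of_aemeasurable (by fun_prop) (measurableSet_Ioi.preimage (by fun_prop)),
    Measure.restrict_apply' measurableSet_Ioi]
  congr 1
  ext t
  simp only [mem_inter_iff, mem_preimage, mem_Ioi, lt_max_iff, hx.not_gt, or_false]
  exact ⟨fun ⟨h, ht⟩ => (Real.lt_log_iff_exp_lt ht).1 h,
    fun h => have ht := (Real.exp_pos x).trans h; ⟨(Real.lt_log_iff_exp_lt ht).2 h, ht⟩⟩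

lemma Asymptotics.IsLittleO.tailDist_posLogMeasure {U U' : Measure ℝ}
    (h : tailDist U =o[atTop] tailDist U') :
    tailDist (posLogMeasure U) =o[atTop] tailDist (posLogMeasure U') := by
  refine (h.comp_tendsto Real.tendsto_exp_atTop).congr' ?_ ?_ <;>
    filter_upwards [eventually_ge_atTop 0] with x hx <;>
    simp only [Function.comp_apply, tailDist, posLogMeasure_Ioi _ hx]

end LogTransform

theorem MemSRV.smul {α : ℝ} {U : Measure ℝ} (hU : MemSRV α U) {c : ℝ≥0∞} (hc₀ : c ≠ 0)
    (hc : c ≠ ∞) : MemSRV α (c • U) := by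
  obtain ⟨hU₀, hU⟩ := hU
  have hnorm : ((c • U) (Ioi 0))⁻¹ • (c • U).restrict (Ioi 0) =
      (U (Ioi 0))⁻¹ • U.restrict (Ioi 0) := by
    rw [Measure.smul_apply, smul_eq_mul, Measure.restrict_smul, smul_smul,
      ENNReal.mul_inv (.inl hc₀) (.inl hc), mul_right_comm, ENNReal.inv_mul_cancel hc₀ hc, one_mul]
  exact ⟨by simp [hc₀, hU₀], hnorm ▸ hU⟩

theorem MemSRV.add_of_isLittleO {α : ℝ} {F G : Measure ℝ} [IsFiniteMeasure F] [IsFiniteMeasure G]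
    (hα : 0 ≤ α) (hF : MemSRV α F) (hG : tailDist G =o[atTop] tailDist F) :
    MemSRV α (F + G) := by
  obtain ⟨hF₀, hFCE⟩ := hF
  set c := (F + G) (Ioi 0)
  have hc₀ : c ≠ 0 := by simp [c, hF₀]
  have hc : c ≠ ∞ := measure_ne_top _ _
  have hν := posMod_map_log_smul_restrict (F (Ioi 0))⁻¹ F
  have : IsFiniteMeasure (posMod (((F (Ioi 0))⁻¹ • F.restrict (Ioi 0)).map Real.log)) :=
    hν ▸ (posLogMeasure F).smul_finite (inv_ne_top.2 hF₀)
  refine ⟨hc₀, hFCE.of_posMod_eq_smul_add_smul (B := posLogMeasure G) (a := c⁻¹ * F (Ioi 0))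
    (b := c⁻¹) hα ?_ (mul_ne_zero (ENNReal.inv_ne_zero.2 hc) hF₀)
    (mul_ne_top (inv_ne_top.2 hc₀) (measure_ne_top _ _)) (inv_ne_top.2 hc₀) ?_⟩
  · rw [hν, funext (tailDist_smul _ _)]
    exact hG.tailDist_posLogMeasure.const_mul_right
      (toReal_pos (ENNReal.inv_ne_zero.2 (measure_ne_top _ _)) (inv_ne_top.2 hF₀)).ne'
  · rw [posMod_map_log_smul_restrict, hν, posLogMeasure_add, smul_add, smul_smul, mul_assoc,
      ENNReal.mul_inv_cancel hF₀ (measure_ne_top _ _), mul_one]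

theorem stmt_16_general
    (F G : Measure ℝ) [IsProbabilityMeasure F] [IsProbabilityMeasure G]
    (α : ℝ) (hα : 0 ≤ α)
    (hF : MemSRV α F)
    (ho : (fun x => tailDist G x) =o[atTop] (fun x => tailDist F x)) :
    AssumpA α F G := by
  intro p hp _
  have := F.smul_finite (ofReal_ne_top (r := p))
  have := G.smul_finite (ofReal_ne_top (r := 1 - p))
  refine (hF.smul (ofReal_pos.2 hp).ne' ofReal_ne_top).add_of_isLittleO hα ?_
  rw [funext (tailDist_smul _ G), funext (tailDist_smul _ F)]
  exact (ho.const_mul_left _).const_mul_right (toReal_pos (ofReal_pos.2 hp).ne' ofReal_ne_top).ne'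

/-- Special case (a) of Assumption A: if `F ∈ R*_{-α}` and `Ḡ(x) = o(F̄(x))`, then every
convex combination `pF + (1-p)G`, `0 < p < 1`, is in `R*_{-α}`. -/
theorem stmt_16
    (F G : Measure ℝ) [IsProbabilityMeasure F] [IsProbabilityMeasure G]
    (hGpos : G (Set.Iic 0) = 0)
    (α : ℝ) (hα : 0 ≤ α)
    (hF : MemSRV α F)
    (ho : (fun x => tailDist G x) =o[atTop] (fun x => tailDist F x)) :
    AssumpA α F G :=
  stmt_16_general F G α hα hF ho
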